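/- arXiv:2212.07365 — 3 statements merged into one kernel-verified Lean document; each statement's English description precedes it below -/
import Mathlib

section
/- Let m be a positive integer, let y, μ_l, μ_k ∈ ℝ^m, and let α_l, α_k ∈ (0,∞)^m be fixed strictly positive base steepness vectors. Assume that y_i ≠ μ_{li} and y_i ≠ μ_{ki} for every i = 1, …, m, and that μ_{ki} ≥ μ_{li} for every i = 1, …, m. Then the error Λ(y; μ_l, tα_l)·P(y; μ_k, tα_k) − H(y; (μ_l, tα_l), (μ_k, tα_k)) converges to 0 exponentially as the steepness goes to infinity: there exist constants C, c > 0 such that |Λ(y; μ_l, tα_l)·P(y; μ_k, tα_k) − H(y; (μ_l, tα_l), (μ_k, tα_k))| ≤ C·exp(−c·t) for all t ≥ 1. -/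
/-! The error is at most `P(y; μ_k, tα_k)` itself, since `0 ≤ Λ ≤ 1` and `H` is either `P`
or `0`. The RBF satisfies `ρ(y; μ, α) ≤ exp (-|α (y - μ)|)`, and every factor of `P` is
at most `1`, so a single coordinate `i` with `y_i ≠ μ_{ki}` already gives
`P(y; μ_k, tα_k) ≤ exp (-t α_{ki} |y_i - μ_{ki}|)`. -/

open MeasureTheory ProbabilityTheory Real

noncomputable def logisticFun (y μ α : ℝ) : ℝ := 1 / (1 + Real.exp (-α * (y - μ)))

noncomputable def rbfFun (y μ α : ℝ) : ℝ :=
  Real.exp (-α * (y - μ)) / (1 + Real.exp (-α * (y - μ))) ^ 2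

noncomputable def conjLog {m : ℕ} (y μ α : Fin m → ℝ) : ℝ :=
  ∏ i, logisticFun (y i) (μ i) (α i)

noncomputable def conjRBF {m : ℕ} (y μ α : Fin m → ℝ) : ℝ :=
  ∏ i, rbfFun (y i) (μ i) (α i)

open scoped Classical in
/-- Decision function `H(y; (μl, αl), (μk, αk))`. -/
noncomputable def decisionH {m : ℕ} (y μl αl μk αk : Fin m → ℝ) : ℝ :=
  if ∀ i, μl i < μk i then conjRBF y μk αk else 0

lemma exp_div_one_add_exp_sq_le (u : ℝ) : exp u / (1 + exp u) ^ 2 ≤ exp (-|u|) := by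
  have hu : 0 < exp u := exp_pos u
  rw [div_le_iff₀ (by positivity)]
  rcases le_total u 0 with hneg | hpos
  · rw [abs_of_nonpos hneg, neg_neg]
    nlinarith [mul_pos hu (mul_pos hu hu)]
  · have hinv : exp (-u) * exp u = 1 := by rw [← exp_add, neg_add_cancel, exp_zero]
    rw [abs_of_nonneg hpos]
    nlinarith [exp_pos (-u)]

section Scalar

variable (y μ α : ℝ)

lemma logisticFun_nonneg : 0 ≤ logisticFun y μ α := by
  unfold logisticFun; positivity

lemma logisticFun_le_one : logisticFun y μ α ≤ 1 := by
  unfold logisticFun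
  rw [div_le_one (by positivity)]
  linarith [exp_pos (-α * (y - μ))]

lemma rbfFun_nonneg : 0 ≤ rbfFun y μ α := by
  unfold rbfFun; positivity

lemma rbfFun_le_exp_neg_abs : rbfFun y μ α ≤ exp (-|α * (y - μ)|) := by
  simpa only [rbfFun, neg_mul, abs_neg] using exp_div_one_add_exp_sq_le (-(α * (y - μ)))

lemma rbfFun_le_one : rbfFun y μ α ≤ 1 :=
  (rbfFun_le_exp_neg_abs y μ α).trans (exp_le_one_iff.mpr (neg_nonpos.mpr (abs_nonneg _)))

lemma rbfFun_mul_le_exp {t : ℝ} (ht : 0 ≤ t) (hα : 0 ≤ α) :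
    rbfFun y μ (t * α) ≤ exp (-(α * |y - μ|) * t) := by
  have habs : |t * α * (y - μ)| = α * |y - μ| * t := by
    rw [abs_mul, abs_mul, abs_of_nonneg ht, abs_of_nonneg hα]; ring
  simpa only [habs, neg_mul] using rbfFun_le_exp_neg_abs y μ (t * α)

end Scalar

section Conjunctive

variable {m : ℕ} (y μ α : Fin m → ℝ)

lemma conjLog_nonneg : 0 ≤ conjLog y μ α :=
  Finset.prod_nonneg fun _ _ => logisticFun_nonneg _ _ _

lemma conjLog_le_one : conjLog y μ α ≤ 1 :=
  Finset.prod_le_one (fun _ _ => logisticFun_nonneg _ _ _) fun _ _ => logisticFun_le_one _ _ _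

lemma conjRBF_nonneg : 0 ≤ conjRBF y μ α :=
  Finset.prod_nonneg fun _ _ => rbfFun_nonneg _ _ _

lemma conjRBF_le_rbfFun (i : Fin m) : conjRBF y μ α ≤ rbfFun (y i) (μ i) (α i) := by
  simpa only [conjRBF, Finset.prod_singleton] using
    Finset.prod_le_prod_of_subset_of_le_one (Finset.subset_univ {i})
      (fun _ _ => rbfFun_nonneg _ _ _) fun _ _ _ => rbfFun_le_one _ _ _

lemma abs_conjLog_mul_conjRBF_sub_decisionH_le (μl αl μk αk : Fin m → ℝ) :
    |conjLog y μl αl * conjRBF y μk αk - decisionH y μl αl μk αk| ≤ conjRBF y μk αk := by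
  have hL0 := conjLog_nonneg y μl αl
  have hL1 := conjLog_le_one y μl αl
  have hP0 := conjRBF_nonneg y μk αk
  unfold decisionH
  split_ifs
  · rw [abs_sub_comm, abs_of_nonneg (by nlinarith)]
    nlinarith
  · rw [sub_zero, abs_of_nonneg (mul_nonneg hL0 hP0)]
    nlinarith

end Conjunctive

theorem logistic_mul_rbf_sub_H_exp_decay_general
    (m : ℕ) (hm : 0 < m) (y μl μk αl αk : Fin m → ℝ)
    (hαk : ∀ i, 0 < αk i)
    (hyk : ∀ i, y i ≠ μk i) :
    ∃ C c : ℝ, 0 < C ∧ 0 < c ∧ ∀ t : ℝ, 1 ≤ t →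
      |conjLog y μl (fun i => t * αl i) * conjRBF y μk (fun i => t * αk i)
          - decisionH y μl (fun i => t * αl i) μk (fun i => t * αk i)|
        ≤ C * Real.exp (-c * t) := by
  let i₀ : Fin m := ⟨0, hm⟩
  have hc : 0 < αk i₀ * |y i₀ - μk i₀| :=
    mul_pos (hαk i₀) (abs_pos.mpr (sub_ne_zero.mpr (hyk i₀)))
  refine ⟨1, _, one_pos, hc, fun t ht => ?_⟩
  calc _ ≤ conjRBF y μk (fun i => t * αk i) := abs_conjLog_mul_conjRBF_sub_decisionH_le ..
    _ ≤ rbfFun (y i₀) (μk i₀) (t * αk i₀) := conjRBF_le_rbfFun _ _ _ i₀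
    _ ≤ exp (-(αk i₀ * |y i₀ - μk i₀|) * t) :=
        rbfFun_mul_le_exp _ _ _ (zero_le_one.trans ht) (hαk i₀).le
    _ = _ := (one_mul _).symm

theorem logistic_mul_rbf_sub_H_exp_decay
    (m : ℕ) (hm : 0 < m) (y μl μk αl αk : Fin m → ℝ)
    (hαl : ∀ i, 0 < αl i) (hαk : ∀ i, 0 < αk i)
    (hyl : ∀ i, y i ≠ μl i) (hyk : ∀ i, y i ≠ μk i)
    (hcenter : ∀ i, μl i ≤ μk i) :
    ∃ C c : ℝ, 0 < C ∧ 0 < c ∧ ∀ t : ℝ, 1 ≤ t →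
      |conjLog y μl (fun i => t * αl i) * conjRBF y μk (fun i => t * αk i)
          - decisionH y μl (fun i => t * αl i) μk (fun i => t * αk i)|
        ≤ C * Real.exp (-c * t) :=
  logistic_mul_rbf_sub_H_exp_decay_general m hm y μl μk αl αk hαk hyk
end

section
/- Let m be a positive integer and μ, α ∈ ℝ^m. The conjunctive RBF y ↦ P(y; μ, α) is differentiable on ℝ^m and its partial derivative with respect to the i-th coordinate is given by ∂P(y; μ, α)/∂y_i = α_i · (1 − 2λ(y_i; μ_i, α_i)) · P(y; μ, α) for every y ∈ ℝ^m and every i = 1, …, m. -/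
open MeasureTheory ProbabilityTheory Real

/-! The conjunctive RBF is a product of functions of one coordinate each, so its `i`-th partial
derivative is `ρ'(yᵢ) · ∏_{j ≠ i} ρ(yⱼ)`. Since `ρ = λ (1 - λ)` and `λ' = α λ (1 - λ)`, one has
`ρ' = α (1 - 2λ) ρ`, and the product reassembles into `α (1 - 2λ) P`. -/

theorem rbfFun_eq_logisticFun_mul (y μ α : ℝ) :
    rbfFun y μ α = logisticFun y μ α * (1 - logisticFun y μ α) := by
  have hpos : 0 < 1 + Real.exp (-α * (y - μ)) := by positivity
  unfold rbfFun logisticFun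
  field_simp
  ring

theorem hasDerivAt_logisticFun (μ α y : ℝ) :
    HasDerivAt (logisticFun · μ α) (α * rbfFun y μ α) y := by
  have hexp : HasDerivAt (fun t => Real.exp (-α * (t - μ))) (Real.exp (-α * (y - μ)) * -α) y := by
    simpa using (((hasDerivAt_id y).sub_const μ).const_mul (-α)).exp
  have hpos : 0 < 1 + Real.exp (-α * (y - μ)) := by positivity
  have hfun : (logisticFun · μ α) = fun t => (1 + Real.exp (-α * (t - μ)))⁻¹ := by
    funext t
    exact one_div _
  rw [hfun]
  refine ((hexp.const_add 1).inv hpos.ne').congr_deriv ?_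
  unfold rbfFun
  field_simp

theorem hasDerivAt_rbfFun (μ α y : ℝ) :
    HasDerivAt (rbfFun · μ α) (α * (1 - 2 * logisticFun y μ α) * rbfFun y μ α) y := by
  have hlog := hasDerivAt_logisticFun μ α y
  rw [funext (rbfFun_eq_logisticFun_mul · μ α)]
  exact (hlog.mul (hlog.const_sub 1)).congr_deriv (by ring)

section SeparableProduct

variable {𝕜 ι : Type*} [NontriviallyNormedField 𝕜] [Fintype ι] [DecidableEq ι]
  {f : ι → 𝕜 → 𝕜} {f' : ι → 𝕜} {y : ι → 𝕜}

theorem hasFDerivAt_prod_apply (hf : ∀ i, HasDerivAt (f i) (f' i) (y i)) :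
    HasFDerivAt (fun z : ι → 𝕜 => ∏ i, f i (z i))
      (∑ i, (∏ j ∈ Finset.univ.erase i, f j (y j)) •
        f' i • ContinuousLinearMap.proj (R := 𝕜) (φ := fun _ : ι => 𝕜) i) y :=
  HasFDerivAt.finsetProd fun i _ =>
    (hf i).comp_hasFDerivAt y (hasFDerivAt_apply i y)

theorem fderiv_prod_apply_single (hf : ∀ i, HasDerivAt (f i) (f' i) (y i)) (i : ι) :
    fderiv 𝕜 (fun z : ι → 𝕜 => ∏ i, f i (z i)) y (Pi.single i 1) =
      f' i * ∏ j ∈ Finset.univ.erase i, f j (y j) := by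
  rw [(hasFDerivAt_prod_apply hf).fderiv, _root_.sum_apply,
    Finset.sum_eq_single_of_mem i (Finset.mem_univ i)]
  · simp [mul_comm]
  · intro j _ hji
    simp [Pi.single_eq_of_ne hji]

end SeparableProduct

theorem conjRBF_differentiable_and_partial_deriv_general (m : ℕ) (μ α : Fin m → ℝ) :
    Differentiable ℝ (fun y : Fin m → ℝ => conjRBF y μ α) ∧
    ∀ (y : Fin m → ℝ) (i : Fin m),
      fderiv ℝ (fun z : Fin m → ℝ => conjRBF z μ α) y (Pi.single i 1)
        = α i * (1 - 2 * logisticFun (y i) (μ i) (α i)) * conjRBF y μ α := by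
  have hρ (y : Fin m → ℝ) (i : Fin m) := hasDerivAt_rbfFun (μ i) (α i) (y i)
  refine ⟨fun y => (hasFDerivAt_prod_apply (hρ y)).differentiableAt, fun y i => ?_⟩
  unfold conjRBF
  rw [fderiv_prod_apply_single (hρ y) i,
    ← Finset.mul_prod_erase Finset.univ _ (Finset.mem_univ i)]
  ring

theorem conjRBF_differentiable_and_partial_deriv (m : ℕ) (hm : 0 < m) (μ α : Fin m → ℝ) :
    Differentiable ℝ (fun y : Fin m → ℝ => conjRBF y μ α) ∧
    ∀ (y : Fin m → ℝ) (i : Fin m),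
      fderiv ℝ (fun z : Fin m → ℝ => conjRBF z μ α) y (Pi.single i 1)
        = α i * (1 - 2 * logisticFun (y i) (μ i) (α i)) * conjRBF y μ α :=
  conjRBF_differentiable_and_partial_deriv_general m μ α
end

section
/- Let a > 0 and α ∈ ℝ, and let Y and M be independent random variables, each uniformly distributed on the interval [−a, a]. Then the expected value of the logistic function evaluated at the random measurement Y with random center M equals one half: E[λ(Y; M, α)] = 1/2. -/
open MeasureTheory ProbabilityTheory Real

/-! Since `λ(y; μ, α) + λ(μ; y, α) = 1` and an i.i.d. pair `(Y, M)` has the same law as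
`(M, Y)`, the expectations of `λ(Y; M, α)` and `λ(M; Y, α)` agree and add up to `1`. -/

namespace ProbabilityTheory

variable {Ω β : Type*} [MeasurableSpace Ω] [MeasurableSpace β] {μ : Measure Ω}
  {X Y : Ω → β}

theorem IndepFun.identDistrib_prodMk_swap [IsFiniteMeasure μ] (hind : IndepFun X Y μ)
    (hid : IdentDistrib X Y μ μ) :
    IdentDistrib (fun ω => (X ω, Y ω)) (fun ω => (Y ω, X ω)) μ μ where
  aemeasurable_fst := hid.aemeasurable_fst.prodMk hid.aemeasurable_snd
  aemeasurable_snd := hid.aemeasurable_snd.prodMk hid.aemeasurable_fst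
  map_eq := by
    rw [(indepFun_iff_map_prod_eq_prod_map_map hid.aemeasurable_fst hid.aemeasurable_snd).mp hind,
      (indepFun_iff_map_prod_eq_prod_map_map hid.aemeasurable_snd hid.aemeasurable_fst).mp
        hind.symm, hid.map_eq]

theorem IdentDistrib.integral_eq_half_of_add_swap_eq_one [IsProbabilityMeasure μ]
    {f : β × β → ℝ} (hf : Measurable f) (hswap : ∀ p, f p + f p.swap = 1)
    (hid : IdentDistrib (fun ω => (X ω, Y ω)) (fun ω => (Y ω, X ω)) μ μ)
    (hint : Integrable (fun ω => f (X ω, Y ω)) μ) :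
    ∫ ω, f (X ω, Y ω) ∂μ = 1 / 2 := by
  have hid_f := hid.comp hf
  have heq : ∫ ω, f (X ω, Y ω) ∂μ = ∫ ω, f (Y ω, X ω) ∂μ := hid_f.integral_eq
  have hint_swap : Integrable (fun ω => f (Y ω, X ω)) μ := hid_f.integrable_iff.mp hint
  have hsum : ∫ ω, f (X ω, Y ω) ∂μ + ∫ ω, f (Y ω, X ω) ∂μ = 1 := by
    have hpointwise (ω : Ω) : f (X ω, Y ω) + f (Y ω, X ω) = 1 := hswap (X ω, Y ω)
    simp [← integral_add hint hint_swap, hpointwise]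
  linarith

end ProbabilityTheory

theorem logisticFun_add_logisticFun_swap (y μ α : ℝ) :
    logisticFun y μ α + logisticFun μ y α = 1 := by
  have hexp : Real.exp (-α * (μ - y)) = (Real.exp (-α * (y - μ)))⁻¹ := by
    rw [← Real.exp_neg]; ring_nf
  have hpos := Real.exp_pos (-α * (y - μ))
  rw [logisticFun, logisticFun, hexp]
  field_simp
  ring

theorem continuous_logisticFun (α : ℝ) :
    Continuous fun p : ℝ × ℝ => logisticFun p.1 p.2 α :=
  continuous_const.div (by fun_prop) fun p => (add_pos one_pos (Real.exp_pos _)).ne'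

theorem abs_logisticFun_le_one (y μ α : ℝ) : |logisticFun y μ α| ≤ 1 := by
  have hpos := Real.exp_pos (-α * (y - μ))
  rw [logisticFun, abs_of_pos (by positivity), div_le_one (by positivity)]
  linarith

theorem integral_logisticFun_of_iid {Ω : Type*} [MeasurableSpace Ω] {μ : Measure Ω}
    [IsProbabilityMeasure μ] {Y M : Ω → ℝ} (α : ℝ) (hind : IndepFun Y M μ)
    (hid : IdentDistrib Y M μ μ) :
    ∫ ω, logisticFun (Y ω) (M ω) α ∂μ = 1 / 2 := by
  have hcont := continuous_logisticFun α
  have hint : Integrable (fun ω => logisticFun (Y ω) (M ω) α) μ :=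
    .of_bound (hcont.comp_aestronglyMeasurable
      (hid.aemeasurable_fst.prodMk hid.aemeasurable_snd).aestronglyMeasurable) 1
      (.of_forall fun ω => abs_logisticFun_le_one _ _ _)
  exact (hind.identDistrib_prodMk_swap hid).integral_eq_half_of_add_swap_eq_one
    hcont.measurable (fun p => logisticFun_add_logisticFun_swap p.1 p.2 α) hint

theorem expectation_logistic_uniform
    {Ω : Type*} [MeasurableSpace Ω] (Pr : Measure Ω) [IsProbabilityMeasure Pr]
    (a α : ℝ) (ha : 0 < a) (Y M : Ω → ℝ)
    (hY : pdf.IsUniform Y (Set.Icc (-a) a) Pr)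
    (hM : pdf.IsUniform M (Set.Icc (-a) a) Pr)
    (hInd : IndepFun Y M Pr) :
    ∫ ω, logisticFun (Y ω) (M ω) α ∂Pr = 1 / 2 := by
  have hvol_ne_zero : volume (Set.Icc (-a) a) ≠ 0 := by
    simp [Real.volume_Icc, ha]
  have hvol_ne_top : volume (Set.Icc (-a) a) ≠ ⊤ := by
    simp [Real.volume_Icc]
  have hid : IdentDistrib Y M Pr Pr :=
    ⟨hY.aemeasurable hvol_ne_zero hvol_ne_top, hM.aemeasurable hvol_ne_zero hvol_ne_top,
      hY.trans hM.symm⟩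
  exact integral_logisticFun_of_iid α hInd hid
end
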